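/- Let x be a dyadic point in (0,1), X = (x, F(x)), and Ω the region under the graph of the Knopp function F. Then the weak and strong accessibility exponents satisfy E^w_{Ω^c}(X) = E^s_{Ω^c}(X) = 1/α - 1 and E^w_Ω(X) = E^s_Ω(X) = 0. -/

import Mathlib

open Real MeasureTheory Filter Topology

noncomputable def phi (x : ℝ) : ℝ := |x - round x|

noncomputable def Knopp (α : ℝ) (x : ℝ) : ℝ :=
  ∑' j : ℕ, (2:ℝ) ^ (-(α * (j:ℝ))) * phi ((2:ℝ) ^ j * x)
noncomputable def Ew (Ω : Set (ℝ × ℝ)) (X : ℝ × ℝ) : ℝ :=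
  Filter.liminf (fun r : ℝ =>
    Real.log ((MeasureTheory.volume (Ω ∩ Metric.ball X r)).toReal) / Real.log r) (𝓝[>] (0:ℝ)) - 2

noncomputable def Es (Ω : Set (ℝ × ℝ)) (X : ℝ × ℝ) : ℝ :=
  Filter.limsup (fun r : ℝ =>
    Real.log ((MeasureTheory.volume (Ω ∩ Metric.ball X r)).toReal) / Real.log r) (𝓝[>] (0:ℝ)) - 2

noncomputable def KnoppDomain (α : ℝ) : Set (ℝ × ℝ) :=
  {p | p.1 ∈ Set.Icc (0:ℝ) 1 ∧ p.2 ∈ Set.Icc (0:ℝ) (Knopp α p.1)}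

def isDyadic (x : ℝ) : Prop := ∃ K N : ℕ, Odd K ∧ x = (K:ℝ) / 2 ^ N

/-!
Write `ρ = 2 ^ (-α)`, so that `F x = ∑ ρ ^ j φ (2 ^ j x)`. Splitting the series at the scale
`2 ^ (-m) ≈ |h|` gives the Hölder bound `F (x + h) ≤ F x + C |h| ^ α`. At a dyadic point
`x = K / 2 ^ N` the terms with `j ≥ N` vanish at `x` and equal `ρ ^ j φ (2 ^ j h)` at `x + h`, while
the first `N` terms are Lipschitz; the single term at the scale of `|h|` then gives the cusp
`F (x + h) ≥ F x + |h| ^ α / 8` for small `h`. Balls in `ℝ × ℝ` are squares, and `Ω ∩ B(X, r)`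
contains the rectangle `(x - r, x + r) × (F x - r / 2, F x)`, so `|Ω ∩ B(X, r)| ≍ r ^ 2`, while `Ωᶜ ∩ B(X, r)` is squeezed between the graphs of
`F x + c |u - x| ^ α` and `F x + C |u - x| ^ α`, a region of width `≍ r ^ (1 / α)` and height
`≍ r`, so `|Ωᶜ ∩ B(X, r)| ≍ r ^ (1 + 1 / α)`. Two-sided bounds `V r ≍ r ^ p` force
`log (V r) / log r → p`.
-/

lemma phi_nonneg (x : ℝ) : 0 ≤ phi x := abs_nonneg _

lemma phi_le_half (x : ℝ) : phi x ≤ 1 / 2 := abs_sub_round x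

lemma phi_le_abs (x : ℝ) : phi x ≤ |x| := by simpa [phi] using round_le x 0

lemma phi_add_le (a b : ℝ) : phi (a + b) ≤ phi a + phi b :=
  calc phi (a + b) ≤ |a + b - ((round a + round b : ℤ) : ℝ)| := round_le _ _
    _ = |(a - round a) + (b - round b)| := by push_cast; ring_nf
    _ ≤ phi a + phi b := abs_add_le _ _

lemma phi_intCast_add (n : ℤ) (x : ℝ) : phi (n + x) = phi x := by
  simp only [phi, round_intCast_add, Int.cast_add]
  ring_nf

lemma phi_zero : phi 0 = 0 := by simp [phi]

lemma phi_eq_abs {x : ℝ} (hx : |x| ≤ 1 / 2) : phi x = |x| := by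
  refine (phi_le_abs x).antisymm ?_
  rcases eq_or_ne (round x) 0 with h | h
  · simp [phi, h]
  · have h1 : (1:ℝ) ≤ |(round x : ℝ)| := by exact_mod_cast Int.one_le_abs h
    have h2 := abs_sub_abs_le_abs_sub (round x : ℝ) x
    rw [abs_sub_comm] at h2
    unfold phi
    linarith

lemma phi_pos {x : ℝ} (hx : x ∈ Set.Ioo 0 1) : 0 < phi x := by
  refine abs_pos.mpr (sub_ne_zero.mpr fun h => ?_)
  have h0 : (0:ℝ) < round x := h ▸ hx.1
  have h1 : (round x : ℝ) < 1 := h ▸ hx.2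
  norm_cast at h0 h1
  omega

lemma summable_pow_mul_of_le {ρ B : ℝ} {g : ℕ → ℝ} (hρ0 : 0 ≤ ρ) (hρ1 : ρ < 1)
    (hg0 : ∀ j, 0 ≤ g j) (hgB : ∀ j, g j ≤ B) : Summable fun j => ρ ^ j * g j :=
  Summable.of_nonneg_of_le (fun j => mul_nonneg (pow_nonneg hρ0 j) (hg0 j))
    (fun j => mul_le_mul_of_nonneg_left (hgB j) (pow_nonneg hρ0 j))
    ((summable_geometric_of_lt_one hρ0 hρ1).mul_right B)

lemma eventually_mul_abs_le_rpow {α : ℝ} (hα1 : α < 1) (L : ℝ) {c : ℝ} (hc : 0 < c) :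
    ∀ᶠ h in 𝓝 (0:ℝ), L * |h| ≤ c * |h| ^ α := by
  have hT : Tendsto (fun h : ℝ => L * |h| ^ (1 - α)) (𝓝 0) (𝓝 0) := by
    have hcont : Continuous fun h : ℝ => |h| ^ (1 - α) :=
      continuous_abs.rpow_const fun _ => Or.inr (by linarith)
    have := (hcont.tendsto 0).const_mul L
    simpa [Real.zero_rpow (by linarith : 1 - α ≠ 0)] using this
  filter_upwards [hT.eventually (ge_mem_nhds hc)] with h hh
  calc L * |h| = L * |h| ^ (1 - α) * |h| ^ α := by
        rw [mul_assoc, ← Real.rpow_add' (abs_nonneg h) (by simp), sub_add_cancel, Real.rpow_one]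
    _ ≤ c * |h| ^ α := mul_le_mul_of_nonneg_right hh (Real.rpow_nonneg (abs_nonneg h) α)

section Knopp

variable {α : ℝ}

lemma two_rpow_neg_pow (α : ℝ) (n : ℕ) : ((2:ℝ) ^ (-α)) ^ n = ((2:ℝ) ^ n)⁻¹ ^ α := by
  rw [← Real.rpow_natCast, ← Real.rpow_mul zero_le_two, Real.inv_rpow (by positivity),
    ← Real.rpow_natCast, ← Real.rpow_mul zero_le_two, neg_mul, Real.rpow_neg zero_le_two, mul_comm]

lemma two_rpow_neg_lt_one (hα : 0 < α) : (2:ℝ) ^ (-α) < 1 :=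
  Real.rpow_lt_one_of_one_lt_of_neg one_lt_two (neg_lt_zero.mpr hα)

lemma one_lt_two_mul_two_rpow_neg (hα1 : α < 1) : 1 < 2 * (2:ℝ) ^ (-α) := by
  have : 1 < (2:ℝ) ^ (1 - α) := Real.one_lt_rpow one_lt_two (sub_pos.mpr hα1)
  rwa [Real.rpow_sub zero_lt_two, Real.rpow_one, div_eq_mul_inv, ← Real.rpow_neg zero_le_two]
    at this

lemma knopp_eq_tsum (α x : ℝ) :
    Knopp α x = ∑' j : ℕ, ((2:ℝ) ^ (-α)) ^ j * phi ((2:ℝ) ^ j * x) := by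
  refine tsum_congr fun j => congrArg (· * _) ?_
  rw [← Real.rpow_natCast, ← Real.rpow_mul zero_le_two, neg_mul]

lemma summable_knopp (hα : 0 < α) (x : ℝ) :
    Summable fun j : ℕ => ((2:ℝ) ^ (-α)) ^ j * phi ((2:ℝ) ^ j * x) :=
  summable_pow_mul_of_le (by positivity) (two_rpow_neg_lt_one hα) (fun _ => phi_nonneg _)
    (fun _ => phi_le_half _)

lemma knopp_pos (hα : 0 < α) {x : ℝ} (hx : x ∈ Set.Ioo 0 1) : 0 < Knopp α x := by
  rw [knopp_eq_tsum]
  calc 0 < ((2:ℝ) ^ (-α)) ^ 0 * phi ((2:ℝ) ^ 0 * x) := by simpa using phi_pos hx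
    _ ≤ _ := (summable_knopp hα x).le_tsum 0 fun j _ => mul_nonneg (by positivity) (phi_nonneg _)

lemma knopp_le_add_tsum_min (hα : 0 < α) (x u : ℝ) :
    Knopp α u ≤ Knopp α x + ∑' j : ℕ, ((2:ℝ) ^ (-α)) ^ j * min ((2:ℝ) ^ j * |u - x|) (1 / 2) := by
  have hmin := summable_pow_mul_of_le (B := 1 / 2) (by positivity) (two_rpow_neg_lt_one hα)
    (fun j => le_min (by positivity) (by norm_num)) (fun j => min_le_right ((2:ℝ) ^ j * |u - x|) _)
  rw [knopp_eq_tsum, knopp_eq_tsum, ← (summable_knopp hα x).tsum_add hmin]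
  refine (summable_knopp hα u).tsum_le_tsum (fun j => ?_) ((summable_knopp hα x).add hmin)
  rw [← mul_add]
  refine mul_le_mul_of_nonneg_left ?_ (by positivity)
  have hsplit : (2:ℝ) ^ j * u = 2 ^ j * x + 2 ^ j * (u - x) := by ring
  have habs : |(2:ℝ) ^ j * (u - x)| = 2 ^ j * |u - x| := by rw [abs_mul, abs_of_pos (by positivity)]
  rw [hsplit]
  exact (phi_add_le _ _).trans (add_le_add_right (le_min (habs ▸ phi_le_abs _) (phi_le_half _)) _)

lemma sum_range_pow_mul_min_le {ρ t : ℝ} (hρ : 1 < 2 * ρ) (ht : 0 ≤ t) (n : ℕ) :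
    ∑ j ∈ Finset.range n, ρ ^ j * min ((2:ℝ) ^ j * t) (1 / 2) ≤ (2 * ρ) ^ n * t / (2 * ρ - 1) :=
  calc ∑ j ∈ Finset.range n, ρ ^ j * min ((2:ℝ) ^ j * t) (1 / 2)
      ≤ ∑ j ∈ Finset.range n, (2 * ρ) ^ j * t := Finset.sum_le_sum fun j _ =>
        calc ρ ^ j * min ((2:ℝ) ^ j * t) (1 / 2) ≤ ρ ^ j * (2 ^ j * t) :=
              mul_le_mul_of_nonneg_left (min_le_left _ _) (pow_nonneg (by linarith) j)
          _ = (2 * ρ) ^ j * t := by ring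
    _ = ((2 * ρ) ^ n - 1) / (2 * ρ - 1) * t := by rw [← Finset.sum_mul, geom_sum_eq hρ.ne']
    _ ≤ (2 * ρ) ^ n * t / (2 * ρ - 1) := by
        rw [div_mul_eq_mul_div]
        gcongr
        linarith

lemma tsum_pow_add_mul_min_le {ρ t : ℝ} (hρ0 : 0 ≤ ρ) (hρ1 : ρ < 1) (ht : 0 ≤ t) (n : ℕ) :
    ∑' k : ℕ, ρ ^ (k + n) * min ((2:ℝ) ^ (k + n) * t) (1 / 2) ≤ ρ ^ n / (2 * (1 - ρ)) := by
  have hgeom : HasSum (fun k : ℕ => ρ ^ (k + n) * (1 / 2)) (ρ ^ n / (2 * (1 - ρ))) := by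
    have h := (hasSum_geometric_of_lt_one hρ0 hρ1).mul_left (ρ ^ n / 2)
    have hfun : (fun k : ℕ => ρ ^ (k + n) * (1 / 2)) = fun k => ρ ^ n / 2 * ρ ^ k :=
      funext fun k => by ring
    rwa [hfun, show ρ ^ n / (2 * (1 - ρ)) = ρ ^ n / 2 * (1 - ρ)⁻¹ by rw [mul_comm, ← div_div]; ring]
  have hterm : ∀ k : ℕ, ρ ^ (k + n) * min ((2:ℝ) ^ (k + n) * t) (1 / 2) ≤ ρ ^ (k + n) * (1 / 2) :=
    fun k => mul_le_mul_of_nonneg_left (min_le_right _ _) (pow_nonneg hρ0 _)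
  exact hasSum_le hterm (Summable.of_nonneg_of_le (fun k => mul_nonneg (pow_nonneg hρ0 _)
    (le_min (by positivity) (by norm_num))) hterm hgeom.summable).hasSum hgeom

lemma tsum_pow_mul_min_le (hα : 0 < α) (hα1 : α < 1) {t : ℝ} (ht0 : 0 < t) (ht1 : t ≤ 1) :
    ∑' j : ℕ, ((2:ℝ) ^ (-α)) ^ j * min ((2:ℝ) ^ j * t) (1 / 2)
      ≤ (2 / (2 * (2:ℝ) ^ (-α) - 1) + 1 / (2 * (1 - (2:ℝ) ^ (-α)))) * t ^ α := by
  have hρ1 := two_rpow_neg_lt_one hα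
  have hρ2 := one_lt_two_mul_two_rpow_neg hα1
  set ρ := (2:ℝ) ^ (-α)
  obtain ⟨m, hm1, hm2⟩ := exists_nat_pow_near ((one_le_inv₀ ht0).mpr ht1) one_lt_two
  have hρm : ρ ^ (m + 1) ≤ t ^ α := by
    rw [two_rpow_neg_pow]
    exact Real.rpow_le_rpow (by positivity) (inv_le_of_inv_le₀ ht0 hm2.le) hα.le
  have h2m : 2 ^ (m + 1) * t ≤ 2 := by
    have h := mul_le_mul_of_nonneg_right hm1 ht0.le
    rw [inv_mul_cancel₀ ht0.ne'] at h
    rw [pow_succ]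
    linarith
  have hsum := summable_pow_mul_of_le (B := 1 / 2) (by positivity) hρ1
    (fun j => le_min (by positivity) (by norm_num)) (fun j => min_le_right ((2:ℝ) ^ j * t) _)
  rw [← hsum.sum_add_tsum_nat_add (m + 1)]
  calc _ ≤ (2 * ρ) ^ (m + 1) * t / (2 * ρ - 1) + ρ ^ (m + 1) / (2 * (1 - ρ)) :=
        add_le_add (sum_range_pow_mul_min_le hρ2 ht0.le _)
          (tsum_pow_add_mul_min_le (by positivity) hρ1 ht0.le _)
    _ = (2 ^ (m + 1) * t) * ρ ^ (m + 1) / (2 * ρ - 1) + ρ ^ (m + 1) / (2 * (1 - ρ)) := by ring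
    _ ≤ 2 * t ^ α / (2 * ρ - 1) + t ^ α / (2 * (1 - ρ)) := by gcongr
    _ = _ := by ring

lemma knopp_le_add_mul_rpow (hα : 0 < α) (hα1 : α < 1) :
    ∃ C, ∀ x u, |u - x| ≤ 1 → Knopp α u ≤ Knopp α x + C * |u - x| ^ α := by
  refine ⟨2 / (2 * (2:ℝ) ^ (-α) - 1) + 1 / (2 * (1 - (2:ℝ) ^ (-α))), fun x u hux => ?_⟩
  rcases (abs_nonneg (u - x)).eq_or_lt with h0 | h0
  · rw [← h0, Real.zero_rpow hα.ne', mul_zero, add_zero, sub_eq_zero.mp (abs_eq_zero.mp h0.symm)]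
  · exact (knopp_le_add_tsum_min hα x u).trans
      (add_le_add_right (tsum_pow_mul_min_le hα hα1 h0 hux) _)

lemma phi_two_pow_mul_add_of_dyadic {x : ℝ} {N : ℕ} (K : ℤ) (hx : x = K / 2 ^ N) {j : ℕ}
    (hj : N ≤ j) (h : ℝ) : phi ((2:ℝ) ^ j * (x + h)) = phi ((2:ℝ) ^ j * h) := by
  obtain ⟨i, rfl⟩ := Nat.exists_eq_add_of_le hj
  have hint : (2:ℝ) ^ (N + i) * (x + h) = ((K * 2 ^ i : ℤ) : ℝ) + 2 ^ (N + i) * h := by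
    rw [hx]
    push_cast
    field_simp
    ring
  rw [hint, phi_intCast_add]

lemma sum_range_pow_mul_phi_le {ρ : ℝ} (hρ0 : 0 ≤ ρ) (hρ1 : ρ ≤ 1) (N : ℕ) (x h : ℝ) :
    ∑ j ∈ Finset.range N, ρ ^ j * phi ((2:ℝ) ^ j * x)
      ≤ ∑ j ∈ Finset.range N, ρ ^ j * phi ((2:ℝ) ^ j * (x + h))
        + (∑ j ∈ Finset.range N, (2:ℝ) ^ j) * |h| := by
  rw [Finset.sum_mul, ← Finset.sum_add_distrib]
  gcongr with j
  have hphi : phi (2 ^ j * x) ≤ phi (2 ^ j * (x + h)) + 2 ^ j * |h| :=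
    calc phi (2 ^ j * x) = phi (2 ^ j * (x + h) + -(2 ^ j * h)) := by ring_nf
      _ ≤ phi (2 ^ j * (x + h)) + phi (-(2 ^ j * h)) := phi_add_le _ _
      _ ≤ phi (2 ^ j * (x + h)) + 2 ^ j * |h| := by
          gcongr
          refine (phi_le_abs _).trans_eq ?_
          rw [abs_neg, abs_mul, abs_of_pos (by positivity)]
  calc ρ ^ j * phi (2 ^ j * x) ≤ ρ ^ j * (phi (2 ^ j * (x + h)) + 2 ^ j * |h|) :=
        mul_le_mul_of_nonneg_left hphi (pow_nonneg hρ0 j)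
    _ ≤ ρ ^ j * phi (2 ^ j * (x + h)) + 2 ^ j * |h| := by
        rw [mul_add]
        exact add_le_add le_rfl (mul_le_of_le_one_left (by positivity) (pow_le_one₀ hρ0 hρ1))

lemma exists_le_two_pow_mul_mem_Ioc {t : ℝ} {N : ℕ} (ht : 0 < t) (hN : t * 2 ^ (N + 1) ≤ 1) :
    ∃ m, N ≤ m ∧ 2 ^ m * t ∈ Set.Ioc (1 / 4 : ℝ) (1 / 2) := by
  have h2t : 2 * t ≤ 1 := by
    have : (1:ℝ) ≤ 2 ^ N := one_le_pow₀ one_le_two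
    rw [pow_succ] at hN
    nlinarith
  obtain ⟨m, hm1, hm2⟩ := exists_nat_pow_near ((one_le_inv₀ (by positivity)).mpr h2t) one_lt_two
  have h2t0 : 0 < 2 * t := by positivity
  have hm1' : 2 ^ m * (2 * t) ≤ 1 := by
    have := mul_le_mul_of_nonneg_right hm1 h2t0.le
    rwa [inv_mul_cancel₀ h2t0.ne'] at this
  have hm2' : 1 < 2 ^ (m + 1) * (2 * t) := by
    have := mul_lt_mul_of_pos_right hm2 h2t0
    rwa [inv_mul_cancel₀ h2t0.ne'] at this
  have hNm : (2:ℝ) ^ N * (2 * t) < 2 ^ (m + 1) * (2 * t) :=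
    calc (2:ℝ) ^ N * (2 * t) = t * 2 ^ (N + 1) := by ring
      _ ≤ 1 := hN
      _ < _ := hm2'
  refine ⟨m, Nat.lt_succ_iff.mp ((pow_lt_pow_iff_right₀ one_lt_two).mp
    (lt_of_mul_lt_mul_right hNm h2t0.le)), ?_, ?_⟩ <;> rw [pow_succ] at hm2' <;> linarith

lemma rpow_div_four_le_tsum_pow_add_mul_phi (hα : 0 < α) {N : ℕ} {h : ℝ}
    (hh : |h| * 2 ^ (N + 1) ≤ 1) :
    |h| ^ α / 4 ≤ ∑' k : ℕ, ((2:ℝ) ^ (-α)) ^ (k + N) * phi ((2:ℝ) ^ (k + N) * h) := by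
  have hsum : Summable fun k : ℕ => ((2:ℝ) ^ (-α)) ^ (k + N) * phi ((2:ℝ) ^ (k + N) * h) :=
    (summable_knopp hα h).comp_injective (add_left_injective N)
  have hnonneg : ∀ k : ℕ, 0 ≤ ((2:ℝ) ^ (-α)) ^ (k + N) * phi ((2:ℝ) ^ (k + N) * h) :=
    fun k => mul_nonneg (by positivity) (phi_nonneg _)
  rcases (abs_nonneg h).eq_or_lt with h0 | ht
  · rw [← h0, Real.zero_rpow hα.ne', zero_div]
    exact tsum_nonneg hnonneg
  set t := |h|
  obtain ⟨m, hNm, hm_lo, hm_hi⟩ := exists_le_two_pow_mul_mem_Ioc ht hh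
  have habs : |(2:ℝ) ^ m * h| = 2 ^ m * t := by rw [abs_mul, abs_of_pos (by positivity)]
  have hphi : phi (2 ^ m * h) = 2 ^ m * t := by rw [phi_eq_abs (by rw [habs]; linarith), habs]
  have hρm : t ^ α ≤ ((2:ℝ) ^ (-α)) ^ m := by
    rw [two_rpow_neg_pow]
    refine Real.rpow_le_rpow ht.le ?_ hα.le
    rw [← one_div, le_div_iff₀ (by positivity)]
    linarith
  calc t ^ α / 4 = t ^ α * (1 / 4) := by ring
    _ ≤ ((2:ℝ) ^ (-α)) ^ m * (2 ^ m * t) := mul_le_mul hρm hm_lo.le (by norm_num) (by positivity)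
    _ = ((2:ℝ) ^ (-α)) ^ (m - N + N) * phi ((2:ℝ) ^ (m - N + N) * h) := by
        rw [Nat.sub_add_cancel hNm, hphi]
    _ ≤ _ := hsum.le_tsum (m - N) fun k _ => hnonneg k

lemma knopp_add_le_of_dyadic (hα : 0 < α) {x : ℝ} {N : ℕ} (K : ℤ) (hx : x = K / 2 ^ N) {h : ℝ}
    (hh : |h| * 2 ^ (N + 1) ≤ 1) :
    Knopp α x + |h| ^ α / 4 ≤ Knopp α (x + h) + (∑ j ∈ Finset.range N, (2:ℝ) ^ j) * |h| := by
  have htail_x : ∑' k : ℕ, ((2:ℝ) ^ (-α)) ^ (k + N) * phi ((2:ℝ) ^ (k + N) * x) = 0 := by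
    refine (tsum_congr fun k => ?_).trans tsum_zero
    have h0 := phi_two_pow_mul_add_of_dyadic K hx (Nat.le_add_left N k) 0
    rw [add_zero, mul_zero] at h0
    rw [h0, phi_zero, mul_zero]
  have htail_xh : ∑' k : ℕ, ((2:ℝ) ^ (-α)) ^ (k + N) * phi ((2:ℝ) ^ (k + N) * (x + h))
      = ∑' k : ℕ, ((2:ℝ) ^ (-α)) ^ (k + N) * phi ((2:ℝ) ^ (k + N) * h) :=
    tsum_congr fun k => by rw [phi_two_pow_mul_add_of_dyadic K hx (Nat.le_add_left N k)]
  rw [knopp_eq_tsum, knopp_eq_tsum, ← (summable_knopp hα x).sum_add_tsum_nat_add N,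
    ← (summable_knopp hα (x + h)).sum_add_tsum_nat_add N, htail_x, htail_xh]
  linarith [sum_range_pow_mul_phi_le (by positivity) (two_rpow_neg_lt_one hα).le N x h,
    rpow_div_four_le_tsum_pow_add_mul_phi hα hh]

lemma eventually_knopp_add_rpow_le_of_dyadic (hα : 0 < α) (hα1 : α < 1) {x : ℝ} {N : ℕ} (K : ℤ)
    (hx : x = K / 2 ^ N) : ∀ᶠ u in 𝓝 x, Knopp α x + |u - x| ^ α / 8 ≤ Knopp α u := by
  have hclose : ∀ᶠ h in 𝓝 (0:ℝ), |h| * 2 ^ (N + 1) ≤ 1 := by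
    have hcont : Continuous fun h : ℝ => |h| * (2:ℝ) ^ (N + 1) := by fun_prop
    exact (hcont.tendsto' 0 0 (by simp)).eventually (ge_mem_nhds one_pos)
  have hsmall := eventually_mul_abs_le_rpow hα1 (∑ j ∈ Finset.range N, (2:ℝ) ^ j)
    (by norm_num : (0:ℝ) < 1 / 8)
  have hux : Tendsto (fun u => u - x) (𝓝 x) (𝓝 0) :=
    (continuous_sub_right x).tendsto' x 0 (sub_self x)
  filter_upwards [hux.eventually (hclose.and hsmall)] with u ⟨hu, hLu⟩
  have := knopp_add_le_of_dyadic hα K hx hu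
  rw [add_sub_cancel] at this
  linarith

end Knopp

lemma tendsto_log_mul_rpow_div_log {k : ℝ} (hk : 0 < k) (p : ℝ) :
    Tendsto (fun r => Real.log (k * r ^ p) / Real.log r) (𝓝[>] 0) (𝓝 p) := by
  have h : Tendsto (fun r => p + Real.log k / Real.log r) (𝓝[>] 0) (𝓝 (p + 0)) :=
    tendsto_const_nhds.add (tendsto_const_nhds.div_atBot Real.tendsto_log_nhdsGT_zero)
  rw [add_zero] at h
  refine h.congr' ?_
  filter_upwards [Ioo_mem_nhdsGT one_pos] with r ⟨hr0, hr1⟩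
  rw [Real.log_mul hk.ne' (Real.rpow_pos_of_pos hr0 p).ne', Real.log_rpow hr0]
  field_simp [(Real.log_neg hr0 hr1).ne]
  ring

lemma tendsto_log_div_log_of_bounds {V : ℝ → ℝ} {p c C : ℝ} (hc : 0 < c)
    (hV : ∀ᶠ r in 𝓝[>] 0, c * r ^ p ≤ V r ∧ V r ≤ C * r ^ p) :
    Tendsto (fun r => Real.log (V r) / Real.log r) (𝓝[>] 0) (𝓝 p) := by
  have hC : 0 < C := by
    obtain ⟨r, ⟨hcV, hVC⟩, hr⟩ := (hV.and self_mem_nhdsWithin).exists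
    nlinarith [mul_pos hc (Real.rpow_pos_of_pos hr p), Real.rpow_pos_of_pos hr p]
  refine tendsto_of_tendsto_of_tendsto_of_le_of_le' (tendsto_log_mul_rpow_div_log hC p)
    (tendsto_log_mul_rpow_div_log hc p) ?_ ?_
  · filter_upwards [hV, Ioo_mem_nhdsGT one_pos] with r ⟨hcV, hVC⟩ ⟨hr0, hr1⟩
    have hV0 : 0 < V r := (mul_pos hc (Real.rpow_pos_of_pos hr0 p)).trans_le hcV
    exact div_le_div_of_nonpos_of_le (Real.log_neg hr0 hr1).le (Real.log_le_log hV0 hVC)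
  · filter_upwards [hV, Ioo_mem_nhdsGT one_pos] with r ⟨hcV, _⟩ ⟨hr0, hr1⟩
    exact div_le_div_of_nonpos_of_le (Real.log_neg hr0 hr1).le
      (Real.log_le_log (by positivity) hcV)

def regionUnder (f : ℝ → ℝ) : Set (ℝ × ℝ) :=
  {p | p.1 ∈ Set.Icc 0 1 ∧ p.2 ∈ Set.Icc 0 (f p.1)}

noncomputable def logVolumeRatio (Ω : Set (ℝ × ℝ)) (X : ℝ × ℝ) (r : ℝ) : ℝ :=
  Real.log (volume.real (Ω ∩ Metric.ball X r)) / Real.log r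

lemma ew_eq_of_tendsto {Ω : Set (ℝ × ℝ)} {X : ℝ × ℝ} {p : ℝ}
    (h : Tendsto (logVolumeRatio Ω X) (𝓝[>] 0) (𝓝 p)) : Ew Ω X = p - 2 :=
  congrArg (· - 2) h.liminf_eq

lemma es_eq_of_tendsto {Ω : Set (ℝ × ℝ)} {X : ℝ × ℝ} {p : ℝ}
    (h : Tendsto (logVolumeRatio Ω X) (𝓝[>] 0) (𝓝 p)) : Es Ω X = p - 2 :=
  congrArg (· - 2) h.limsup_eq

lemma ball_eq_Ioo_prod_Ioo (X : ℝ × ℝ) (r : ℝ) :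
    Metric.ball X r = Set.Ioo (X.1 - r) (X.1 + r) ×ˢ Set.Ioo (X.2 - r) (X.2 + r) := by
  rw [← ball_prod_same, Real.ball_eq_Ioo, Real.ball_eq_Ioo]

lemma volume_real_mem_Icc_of_Ioo_prod_subset {S : Set (ℝ × ℝ)} {a b c d a' b' c' d' : ℝ}
    (hab : a ≤ b) (hcd : c ≤ d) (hab' : a' ≤ b') (hcd' : c' ≤ d')
    (hin : Set.Ioo a b ×ˢ Set.Ioo c d ⊆ S) (hout : S ⊆ Set.Ioo a' b' ×ˢ Set.Ioo c' d') :
    (b - a) * (d - c) ≤ volume.real S ∧ volume.real S ≤ (b' - a') * (d' - c') := by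
  have hfin : volume (Set.Ioo a' b' ×ˢ Set.Ioo c' d') ≠ ⊤ :=
    ((Metric.isBounded_Ioo a' b').prod (Metric.isBounded_Ioo c' d')).measure_lt_top.ne
  have hvol : ∀ {a b c d : ℝ}, a ≤ b → c ≤ d →
      volume.real (Set.Ioo a b ×ˢ Set.Ioo c d) = (b - a) * (d - c) := fun hab hcd => by
    rw [Measure.volume_eq_prod, measureReal_prod_prod, Real.volume_real_Ioo_of_le hab,
      Real.volume_real_Ioo_of_le hcd]
  refine ⟨?_, ?_⟩
  · rw [← hvol hab hcd]
    exact measureReal_mono hin ((measure_mono hout).trans_lt hfin.lt_top).ne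
  · rw [← hvol hab' hcd']
    exact measureReal_mono hout hfin

lemma tendsto_logVolumeRatio_regionUnder {f : ℝ → ℝ} {x : ℝ} (hx : x ∈ Set.Ioo 0 1)
    (hfx : 0 < f x) (hmin : ∀ᶠ u in 𝓝 x, f x ≤ f u) :
    Tendsto (logVolumeRatio (regionUnder f) (x, f x)) (𝓝[>] 0) (𝓝 2) := by
  obtain ⟨ε, hε, hmin⟩ := Metric.eventually_nhds_iff.mp hmin
  refine tendsto_log_div_log_of_bounds
    (V := fun r => volume.real (regionUnder f ∩ Metric.ball (x, f x) r)) (c := 1) (C := 4) one_pos ?_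
  filter_upwards [Ioo_mem_nhdsGT (lt_min (lt_min hε hfx) (lt_min hx.1 (sub_pos.mpr hx.2)))]
    with r ⟨hr0, hr⟩
  simp only [lt_min_iff] at hr
  obtain ⟨⟨hrε, hrf⟩, hrx, hrx'⟩ := hr
  have hin : Set.Ioo (x - r) (x + r) ×ˢ Set.Ioo (f x - r / 2) (f x)
      ⊆ regionUnder f ∩ Metric.ball (x, f x) r := by
    rintro ⟨u, y⟩ ⟨⟨hu1, hu2⟩, hy1, hy2⟩
    have hfu : f x ≤ f u := hmin (by rw [Real.dist_eq, abs_sub_lt_iff]; constructor <;> linarith)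
    refine ⟨⟨⟨by linarith, by linarith⟩, by linarith, by linarith⟩, ?_⟩
    rw [ball_eq_Ioo_prod_Ioo]
    exact ⟨⟨hu1, hu2⟩, by linarith, by linarith⟩
  have hout : regionUnder f ∩ Metric.ball (x, f x) r
      ⊆ Set.Ioo (x - r) (x + r) ×ˢ Set.Ioo (f x - r) (f x + r) :=
    ball_eq_Ioo_prod_Ioo (x, f x) r ▸ Set.inter_subset_right
  obtain ⟨hlo, hhi⟩ := volume_real_mem_Icc_of_Ioo_prod_subset (by linarith) (by linarith)
    (by linarith) (by linarith) hin hout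
  rw [Real.rpow_two]
  constructor
  · convert hlo using 1
    ring
  · convert hhi using 1
    ring

lemma Ioo_prod_Ioo_subset_compl_regionUnder_inter_ball {f : ℝ → ℝ} {x r ρ : ℝ} (hρr : ρ ≤ r)
    (hf : ∀ u ∈ Set.Ioo x (x + ρ), f u ≤ f x + r / 2) :
    Set.Ioo x (x + ρ) ×ˢ Set.Ioo (f x + r / 2) (f x + r)
      ⊆ (regionUnder f)ᶜ ∩ Metric.ball (x, f x) r := by
  rintro ⟨u, y⟩ ⟨hu, hy1, hy2⟩
  refine ⟨fun hmem => ?_, ?_⟩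
  · linarith [hmem.2.2, hf u hu]
  · rw [ball_eq_Ioo_prod_Ioo]
    exact ⟨⟨by linarith [hu.1], by linarith [hu.2]⟩, by linarith, by linarith⟩

lemma compl_regionUnder_inter_ball_subset {f : ℝ → ℝ} {x r w : ℝ} (hrx : r ≤ x)
    (hrx' : r ≤ 1 - x) (hrf : r ≤ f x) (hf : ∀ u, |u - x| < r → f u < f x + r → |u - x| < w) :
    (regionUnder f)ᶜ ∩ Metric.ball (x, f x) r
      ⊆ Set.Ioo (x - w) (x + w) ×ˢ Set.Ioo (f x - r) (f x + r) := by
  rintro ⟨u, y⟩ ⟨hnot, hball⟩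
  rw [ball_eq_Ioo_prod_Ioo] at hball
  obtain ⟨⟨hu1, hu2⟩, hy1, hy2⟩ := hball
  have hfu : f u < y := not_le.mp fun hyu => hnot ⟨⟨by linarith, by linarith⟩, by linarith, hyu⟩
  have hux := hf u (abs_sub_lt_iff.mpr ⟨by linarith, by linarith⟩) (by linarith)
  rw [abs_sub_lt_iff] at hux
  exact ⟨⟨by linarith, by linarith⟩, hy1, hy2⟩

lemma tendsto_logVolumeRatio_compl_regionUnder {f : ℝ → ℝ} {x α a C : ℝ} (hα : 0 < α)
    (hα1 : α ≤ 1) (hx : x ∈ Set.Ioo 0 1) (hfx : 0 < f x) (ha : 0 < a)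
    (hlow : ∀ᶠ u in 𝓝 x, f x + a * |u - x| ^ α ≤ f u)
    (hup : ∀ᶠ u in 𝓝 x, f u ≤ f x + C * |u - x| ^ α) :
    Tendsto (logVolumeRatio (regionUnder f)ᶜ (x, f x)) (𝓝[>] 0) (𝓝 (1 + α⁻¹)) := by
  obtain ⟨ε, hε, hgrowth⟩ := Metric.eventually_nhds_iff.mp (hlow.and hup)
  -- With `B ≥ 1`, the box of width `ρ = (r / 2B) ^ α⁻¹` fits into the ball once `r < 1`.
  set B := max C 1
  have hB : 1 ≤ B := le_max_right _ _
  refine tendsto_log_div_log_of_bounds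
    (V := fun r => volume.real ((regionUnder f)ᶜ ∩ Metric.ball (x, f x) r))
    (c := (2 * (2 * B) ^ α⁻¹)⁻¹) (C := 4 / a ^ α⁻¹) (by positivity) ?_
  filter_upwards [Ioo_mem_nhdsGT (lt_min (lt_min hε hfx)
    (lt_min (lt_min hx.1 (sub_pos.mpr hx.2)) one_pos))] with r ⟨hr0, hr⟩
  simp only [lt_min_iff] at hr
  obtain ⟨⟨hrε, hrf⟩, ⟨hrx, hrx'⟩, hr1⟩ := hr
  set ρ := (r / (2 * B)) ^ α⁻¹
  set w := (r / a) ^ α⁻¹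
  have hρr : ρ ≤ r :=
    calc ρ ≤ (r / (2 * B)) ^ (1:ℝ) :=
          Real.rpow_le_rpow_of_exponent_ge (by positivity)
            ((div_le_one (by positivity)).mpr (by linarith)) ((one_le_inv₀ hα).mpr hα1)
      _ = r / (2 * B) := Real.rpow_one _
      _ ≤ r := div_le_self hr0.le (by linarith)
  have hin := Ioo_prod_Ioo_subset_compl_regionUnder_inter_ball (f := f) hρr fun u ⟨hu1, hu2⟩ =>
    calc f u ≤ f x + C * |u - x| ^ α :=
          (hgrowth (by rw [Real.dist_eq, abs_lt]; constructor <;> linarith)).2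
      _ ≤ f x + B * ρ ^ α := by
          gcongr
          · exact le_max_left _ _
          · rw [abs_of_pos (by linarith)]
            linarith
      _ = f x + r / 2 := by
          rw [Real.rpow_inv_rpow (by positivity) hα.ne']
          field_simp
  have hout := compl_regionUnder_inter_ball_subset (w := w) hrx.le hrx'.le hrf.le
    fun u hux hfu => by
      rw [Real.lt_rpow_inv_iff_of_pos (abs_nonneg _) (by positivity) hα, lt_div_iff₀' ha]
      linarith [(hgrowth (show dist u x < ε by rw [Real.dist_eq]; linarith)).1]
  obtain ⟨hlo, hhi⟩ := volume_real_mem_Icc_of_Ioo_prod_subset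
    (by linarith [show 0 ≤ ρ by positivity]) (by linarith)
    (by linarith [show 0 ≤ w by positivity]) (by linarith) hin hout
  rw [Real.rpow_add hr0, Real.rpow_one]
  constructor
  · convert hlo using 1
    rw [show ρ = r ^ α⁻¹ / (2 * B) ^ α⁻¹ from Real.div_rpow hr0.le (by positivity) _]
    field_simp
    ring
  · convert hhi using 1
    rw [show w = r ^ α⁻¹ / a ^ α⁻¹ from Real.div_rpow hr0.le ha.le _]
    field_simp
    ring

theorem exponents_at_dyadic (α : ℝ) (hα : 0 < α) (hα1 : α < 1)
    (x : ℝ) (hx : x ∈ Set.Ioo (0:ℝ) 1) (hd : isDyadic x) :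
    Ew (KnoppDomain α)ᶜ (x, Knopp α x) = 1/α - 1 ∧
    Es (KnoppDomain α)ᶜ (x, Knopp α x) = 1/α - 1 ∧
    Ew (KnoppDomain α) (x, Knopp α x) = 0 ∧
    Es (KnoppDomain α) (x, Knopp α x) = 0 := by
  obtain ⟨K, N, -, hxK⟩ := hd
  have hpos := knopp_pos hα hx
  have hlow := eventually_knopp_add_rpow_le_of_dyadic hα hα1 (x := x) (N := N) (K : ℤ)
    (by rw [hxK, Int.cast_natCast])
  obtain ⟨C, hC⟩ := knopp_le_add_mul_rpow hα hα1
  have hup : ∀ᶠ u in 𝓝 x, Knopp α u ≤ Knopp α x + C * |u - x| ^ α := by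
    filter_upwards [Metric.closedBall_mem_nhds x one_pos] with u hu
    exact hC x u (by rwa [Metric.mem_closedBall, Real.dist_eq] at hu)
  have hΩc := tendsto_logVolumeRatio_compl_regionUnder hα hα1.le hx hpos
    (by norm_num : (0:ℝ) < 1 / 8) (hlow.mono fun u hu => by linarith) hup
  have hΩ := tendsto_logVolumeRatio_regionUnder hx hpos
    (hlow.mono fun u hu => by linarith [Real.rpow_nonneg (abs_nonneg (u - x)) α])
  refine ⟨(ew_eq_of_tendsto hΩc).trans (by ring), (es_eq_of_tendsto hΩc).trans (by ring),
    (ew_eq_of_tendsto hΩ).trans (by norm_num), (es_eq_of_tendsto hΩ).trans (by norm_num)⟩
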